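/- arXiv:2412.00839 — 8 statements merged into one kernel-verified Lean document; each statement's English description precedes it below -/
import Mathlib

section
/- Let G be a topological group whose underlying topological space is a Baire space, and let A be a subset of G that is almost open (Baire measurable), i.e., there is an open set U in G such that the symmetric difference A △ U is meager. If A is not meager, then the set A · A⁻¹ = { a b⁻¹ : a, b ∈ A } is a neighborhood of the identity element of G. -/
/-!
Let `A` agree with an open set `U` up to a meagre set; `U` is nonempty because `A` is not meagre.
For `g ∈ U / U` the set `g • A ∩ A` agrees, up to a meagre set, with the nonempty open set
`g • U ∩ U`, which in a Baire space is not meagre. Hence `g • A ∩ A` is nonempty, i.e.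
`g ∈ A / A`, so `A / A` contains the open neighbourhood `U / U` of `1`.
-/

open Pointwise Topology Filter Set
open scoped symmDiff

theorem Set.mem_div_iff_smul_inter_nonempty {G : Type*} [Group G] {s t : Set G} {g : G} :
    g ∈ s / t ↔ (g • t ∩ s).Nonempty := by
  rw [smul_inter_nonempty_iff', mem_div]
  simp only [exists_and_left, and_assoc]

section Residual

variable {X : Type*} [TopologicalSpace X]

theorem isMeagre_iff_residualEq_empty {s : Set X} : IsMeagre s ↔ s =ᵇ (∅ : Set X) :=
  eventuallyEq_empty.symm

theorem residualEq_iff_isMeagre_symmDiff {s t : Set X} : s =ᵇ t ↔ IsMeagre (s ∆ t) := by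
  rw [eventuallyEq_set, IsMeagre, ← eventually_mem_set]
  simp only [mem_compl_iff, mem_symmDiff, not_or, not_and_not_right, iff_iff_implies_and_implies]

theorem Filter.EventuallyEq.isMeagre_iff {s t : Set X} (h : s =ᵇ t) : IsMeagre s ↔ IsMeagre t := by
  simp only [isMeagre_iff_residualEq_empty]
  exact ⟨h.symm.trans, h.trans⟩

theorem Filter.EventuallyEq.smul_set_residual {G : Type*} [Group G] [MulAction G X]
    [ContinuousConstSMul G X] {s t : Set X} (h : s =ᵇ t) (g : G) : g • s =ᵇ g • t := by
  rw [← preimage_smul_inv, ← preimage_smul_inv]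
  exact h.comp_tendsto (tendsto_residual_of_isOpenMap (continuous_const_smul _) (isOpenMap_smul _))

theorem smul_inter_nonempty_of_residualEq_isOpen [BaireSpace X] {G : Type*} [Group G]
    [MulAction G X] [ContinuousConstSMul G X] {A U : Set X} (hU : IsOpen U) (hAU : A =ᵇ U)
    {g : G} (hg : (g • U ∩ U).Nonempty) : (g • A ∩ A).Nonempty :=
  nonempty_of_not_isMeagre <| ((hAU.smul_set_residual g).inter hAU).isMeagre_iff.not.2 <|
    not_isMeagre_of_isOpen ((hU.smul g).inter hU) hg

end Residual

theorem div_mem_nhds_one_of_residualEq_isOpen {G : Type*} [TopologicalSpace G] [Group G]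
    [IsTopologicalGroup G] [BaireSpace G] {A U : Set G} (hU : IsOpen U) (hne : U.Nonempty)
    (hAU : A =ᵇ U) : A / A ∈ 𝓝 1 := by
  obtain ⟨u, hu⟩ := hne
  refine mem_of_superset (hU.div_right.mem_nhds ⟨u, hu, u, hu, div_self' u⟩) fun g hg => ?_
  rw [mem_div_iff_smul_inter_nonempty] at hg ⊢
  exact smul_inter_nonempty_of_residualEq_isOpen hU hAU hg

/-- In a Baire topological group, if `A` is almost open (Baire measurable) and
non-meager, then `A * A⁻¹` is a neighborhood of the identity. -/
theorem mul_inv_mem_nhds_one_of_almost_open_nonmeager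
    {G : Type*} [TopologicalSpace G] [Group G] [IsTopologicalGroup G] [BaireSpace G]
    (A : Set G)
    (hao : ∃ U : Set G, IsOpen U ∧ IsMeagre ((A \ U) ∪ (U \ A)))
    (hnm : ¬ IsMeagre A) :
    A * A⁻¹ ∈ nhds (1 : G) := by
  obtain ⟨U, hU, hAU⟩ := hao
  have hAU : A =ᵇ U := residualEq_iff_isMeagre_symmDiff.2 hAU
  have hne : U.Nonempty := nonempty_of_not_isMeagre (hAU.isMeagre_iff.not.1 hnm)
  rw [← div_eq_mul_inv]
  exact div_mem_nhds_one_of_residualEq_isOpen hU hne hAU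
end

section
/- Let B be a Polish space, F a Polish space, and let E → B be a fiber bundle with model fiber F (i.e., a continuous surjection that is locally trivial with fiber F). Then the total space E is a Polish space. -/
/-!
Every trivialization identifies its source, an open subset of the total space, with
`baseSet × F`, which is Polish; countably many of them cover the total space since `B` is
second countable, and the total space inherits `T0` and regularity from `B` and `F`, so it is
separable and metrizable. In its completion each of the Polish pieces is a `Gδ` (a completely
metrizable subspace of a metric space is always `Gδ`), hence so is the whole total space, and a
`Gδ` subspace of a Polish space is Polish.
-/

open Set Filter Topology TopologicalSpace

theorem IsGδ.polishSpace {X : Type*} [TopologicalSpace X] [PolishSpace X] {s : Set X}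
    (hs : IsGδ s) : PolishSpace s := by
  obtain ⟨U, hU, rfl⟩ := hs.eq_iInter_nat
  have := fun n ↦ (hU n).polishSpace
  -- `⋂ n, U n` is homeomorphic to the diagonal of `∀ n, U n`, which is closed.
  let f : (⋂ n, U n : Set X) → ∀ n, U n := fun x n ↦ ⟨x, mem_iInter.1 x.2 n⟩
  have hf_emb : IsEmbedding f :=
    .of_comp (by fun_prop) (continuous_apply 0).subtype_val IsEmbedding.subtypeVal
  have hf_range : range f = ⋂ n, {y | (y n : X) = y 0} := by
    ext y
    simp only [mem_range, mem_iInter, mem_ofPred_eq]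
    refine ⟨by rintro ⟨x, rfl⟩ n; rfl, fun h ↦ ?_⟩
    refine ⟨⟨y 0, mem_iInter.2 fun n ↦ h n ▸ (y n).2⟩, funext fun n ↦ Subtype.ext (h n).symm⟩
  refine IsClosedEmbedding.polishSpace ⟨hf_emb, ?_⟩
  rw [hf_range]
  exact isClosed_iInter fun n ↦ isClosed_eq (by fun_prop) (by fun_prop)

theorem Topology.IsEmbedding.isGδ_range {X Y : Type*} [TopologicalSpace X]
    [IsCompletelyMetrizableSpace X] [TopologicalSpace Y] [MetrizableSpace Y] {f : X → Y}
    (hf : IsEmbedding f) : IsGδ (range f) := by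
  let := upgradeIsCompletelyMetrizable X
  -- `T n` is the set of points near which `f⁻¹` oscillates by less than `1 / (n + 1)`.
  let T : ℕ → Set Y := fun n ↦
    {y | ∃ U, IsOpen U ∧ y ∈ U ∧ ∀ a ∈ f ⁻¹' U, ∀ b ∈ f ⁻¹' U, dist a b < 1 / (n + 1)}
  have hT_open : ∀ n, IsOpen (T n) := fun n ↦ isOpen_iff_forall_mem_open.2
    fun _ ⟨U, hU, hyU, hU_small⟩ ↦ ⟨U, fun _ hz ↦ ⟨U, hU, hz, hU_small⟩, hU, hyU⟩
  have range_subset : range f ⊆ ⋂ n, T n := by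
    rintro _ ⟨x, rfl⟩
    refine mem_iInter.2 fun n ↦ ?_
    have hball : Metric.ball x (1 / (2 * (n + 1))) ∈ 𝓝 x := Metric.ball_mem_nhds x (by positivity)
    rw [hf.isInducing.nhds_eq_comap, mem_comap] at hball
    obtain ⟨V, hV, hV_ball⟩ := hball
    obtain ⟨U, hUV, hU, hxU⟩ := mem_nhds_iff.1 hV
    refine ⟨U, hU, hxU, fun a ha b hb ↦ ?_⟩
    have ha' := hV_ball (hUV ha)
    have hb' := hV_ball (hUV hb)
    rw [Metric.mem_ball] at ha' hb'
    calc dist a b ≤ dist a x + dist b x := dist_triangle_right a b x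
      _ < 1 / (2 * (n + 1)) + 1 / (2 * (n + 1)) := add_lt_add ha' hb'
      _ = 1 / (n + 1) := by field_simp; ring
  have subset_range : closure (range f) ∩ ⋂ n, T n ⊆ range f := by
    rintro y ⟨hy_closure, hy_T⟩
    -- the trace of `𝓝 y` on `X` is Cauchy, and its limit in `X` is mapped to `y`
    let l : Filter X := comap f (𝓝 y)
    have : l.NeBot := comap_neBot_iff.2 fun t ht ↦ by
      obtain ⟨_, hzt, x, rfl⟩ := mem_closure_iff_nhds.1 hy_closure t ht
      exact ⟨x, hzt⟩
    have hl_cauchy : Cauchy l := by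
      refine Metric.cauchy_iff.2 ⟨this, fun ε hε ↦ ?_⟩
      obtain ⟨n, hn⟩ := exists_nat_one_div_lt hε
      obtain ⟨U, hU, hyU, hU_small⟩ := mem_iInter.1 hy_T n
      exact ⟨f ⁻¹' U, preimage_mem_comap (hU.mem_nhds hyU),
        fun a ha b hb ↦ (hU_small a ha b hb).trans hn⟩
    obtain ⟨x, hx⟩ := CompleteSpace.complete hl_cauchy
    exact ⟨x, tendsto_nhds_unique ((hf.continuous.tendsto x).mono_left hx) tendsto_comap⟩
  rw [subset_antisymm (subset_inter subset_closure range_subset) subset_range]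
  exact isClosed_closure.isGδ.inter (.iInter fun n ↦ (hT_open n).isGδ)

theorem IsGδ.of_open_cover {X ι : Type*} [TopologicalSpace X] [PerfectlyNormalSpace X]
    [Countable ι] {s : Set X} {W : ι → Set X} (hW : ∀ i, IsOpen (W i)) (hsW : s ⊆ ⋃ i, W i)
    (hs : ∀ i, IsGδ (s ∩ W i)) : IsGδ s := by
  have : s = (⋃ i, W i) ∩ ⋂ i, ((W i)ᶜ ∪ s ∩ W i) := by
    ext x
    simp only [mem_inter_iff, mem_iUnion, mem_iInter, mem_union, mem_compl_iff]
    refine ⟨fun hx ↦ ⟨mem_iUnion.1 (hsW hx), fun i ↦ (em' _).imp id (⟨hx, ·⟩)⟩, ?_⟩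
    rintro ⟨⟨i, hi⟩, h⟩
    exact ((h i).resolve_left (not_not.2 hi)).1
  rw [this]
  exact (isOpen_iUnion hW).isGδ.inter (.iInter fun i ↦ (hW i).isClosed_compl.isGδ.union (hs i))

theorem RegularSpace.of_exists_isClosed_mem_nhds {X : Type*} [TopologicalSpace X]
    (h : ∀ x : X, ∃ C : Set X, IsClosed C ∧ C ∈ 𝓝 x ∧ RegularSpace C) : RegularSpace X := by
  refine .of_exists_mem_nhds_isClosed_subset fun x s hs ↦ ?_
  obtain ⟨C, hC_closed, hC_nhds, hC_reg⟩ := h x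
  let x' : C := ⟨x, mem_of_mem_nhds hC_nhds⟩
  obtain ⟨D, hD_nhds, hD_closed, hDs⟩ :=
    exists_mem_nhds_isClosed_subset (continuous_subtype_val.continuousAt.preimage_mem_nhds hs :
      Subtype.val ⁻¹' s ∈ 𝓝 x')
  refine ⟨(↑) '' D, ?_, hC_closed.isClosedMap_subtype_val D hD_closed, by simpa using hDs⟩
  rw [mem_nhds_subtype_iff_nhdsWithin, nhdsWithin_eq_nhds.2 hC_nhds] at hD_nhds
  exact hD_nhds

theorem PolishSpace.of_open_cover {X ι : Type*} [TopologicalSpace X] [T3Space X] [Countable ι]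
    {U : ι → Set X} (hU : ∀ i, IsOpen (U i)) (hcover : ⋃ i, U i = univ)
    [∀ i, PolishSpace (U i)] : PolishSpace X := by
  have := secondCountableTopology_of_countable_cover hU hcover
  have := metrizableSpace_of_t3_secondCountable X
  let := metrizableSpaceMetric X
  have hc : IsEmbedding ((↑) : X → UniformSpace.Completion X) :=
    (UniformSpace.Completion.isUniformEmbedding_coe X).isEmbedding
  choose W hW hWU using fun i ↦ hc.isInducing.isOpen_iff.1 (hU i)
  have hc_range : IsGδ (range ((↑) : X → UniformSpace.Completion X)) := by
    refine .of_open_cover hW ?_ fun i ↦ ?_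
    · rintro _ ⟨x, rfl⟩
      obtain ⟨i, hi⟩ := iUnion_eq_univ_iff.1 hcover x
      exact mem_iUnion.2 ⟨i, (hWU i).ge hi⟩
    · rw [← image_preimage_eq_range_inter, hWU i, image_eq_range]
      exact (hc.comp .subtypeVal).isGδ_range
  have := hc_range.polishSpace
  exact hc.toHomeomorph.isClosedEmbedding.polishSpace

namespace Bundle.Trivialization

variable {B F Z : Type*} [TopologicalSpace B] [TopologicalSpace F] [TopologicalSpace Z]
  {proj : Z → B}

theorem polishSpace_source [PolishSpace B] [PolishSpace F] (e : Trivialization F proj) :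
    PolishSpace e.source := by
  have := e.open_baseSet.polishSpace
  exact e.sourceHomeomorphBaseSetProd.isClosedEmbedding.polishSpace

end Bundle.Trivialization

namespace FiberBundle

variable {B : Type*} (F : Type*) [TopologicalSpace B] [TopologicalSpace F] (E : B → Type*)
  [TopologicalSpace (Bundle.TotalSpace F E)] [∀ b, TopologicalSpace (E b)] [FiberBundle F E]

theorem t0Space_totalSpace [T0Space B] [T0Space F] : T0Space (Bundle.TotalSpace F E) :=
  .of_open_cover fun x ↦ ⟨_, mem_trivializationAt_proj_source,
    (trivializationAt F E x.proj).open_source,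
    (trivializationAt F E x.proj).sourceHomeomorphBaseSetProd.isEmbedding.t0Space⟩

theorem regularSpace_totalSpace [RegularSpace B] [RegularSpace F] :
    RegularSpace (Bundle.TotalSpace F E) := by
  refine .of_exists_isClosed_mem_nhds fun x ↦ ?_
  let e := trivializationAt F E x.proj
  obtain ⟨K, hK_nhds, hK_closed, hK_base⟩ := exists_mem_nhds_isClosed_subset
    (e.open_baseSet.mem_nhds (mem_baseSet_trivializationAt F E x.proj))
  exact ⟨_, hK_closed.preimage (continuous_proj F E), (continuous_proj F E).continuousAt hK_nhds,
    (e.preimageHomeomorph hK_base).isInducing.regularSpace⟩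

end FiberBundle

/-- The total space of a fiber bundle with Polish base and Polish model fiber is Polish. -/
theorem polishSpace_totalSpace_of_fiberBundle
    {B F : Type*} [TopologicalSpace B] [TopologicalSpace F]
    [PolishSpace B] [PolishSpace F]
    (E : B → Type*) [TopologicalSpace (Bundle.TotalSpace F E)]
    [∀ b, TopologicalSpace (E b)] [FiberBundle F E] :
    PolishSpace (Bundle.TotalSpace F E) := by
  have := FiberBundle.t0Space_totalSpace F E
  have := FiberBundle.regularSpace_totalSpace F E
  obtain ⟨S, hS_countable, hS_cover⟩ := isOpen_iUnion_countable
    (fun b : B ↦ (trivializationAt F E b).baseSet) fun b ↦ (trivializationAt F E b).open_baseSet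
  have := hS_countable.to_subtype
  have := fun b : S ↦ (trivializationAt F E b).polishSpace_source
  refine .of_open_cover (U := fun b : S ↦ (trivializationAt F E b).source)
    (fun b ↦ (trivializationAt F E b).open_source) (iUnion_eq_univ_iff.2 fun x ↦ ?_)
  have hx : x.proj ∈ ⋃ b ∈ S, (trivializationAt F E b).baseSet :=
    hS_cover ▸ mem_iUnion.2 ⟨x.proj, mem_baseSet_trivializationAt F E x.proj⟩
  obtain ⟨b, hb, hxb⟩ := mem_iUnion₂.1 hx
  exact ⟨⟨b, hb⟩, (trivializationAt F E b).mem_source.2 hxb⟩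
end

section
/- Let G and H be connected topological groups and let p : G → H be a continuous group homomorphism that is a covering map. Then G is separable if and only if H is separable. -/
/-!
The image of `p` is an open subgroup of the connected group `H`, hence all of `H`, so `H` is a
continuous image of `G`. Conversely, `p` is a local homeomorphism, so `1 : G` has a neighbourhood
homeomorphic to an open subset of `H`, hence separable. This neighbourhood generates an open, hence
clopen, subgroup, which is all of the connected group `G`; and the subgroup generated by a separable
set lies in the closure of the countable subgroup generated by a countable dense part of it.
-/

open TopologicalSpace Topology

theorem IsLocalHomeomorph.exists_isSeparable_mem_nhds {X Y : Type*} [TopologicalSpace X]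
    [TopologicalSpace Y] [SeparableSpace Y] {f : X → Y} (hf : IsLocalHomeomorph f) (x : X) :
    ∃ s ∈ 𝓝 x, IsSeparable s := by
  obtain ⟨e, hxe, -⟩ := hf x
  have : SeparableSpace e.source := e.isOpenEmbedding_restrict.separableSpace
  exact ⟨e.source, e.open_source.mem_nhds hxe, .of_subtype _⟩

namespace Subgroup

variable {G : Type*} [Group G]

theorem countable_closure {s : Set G} (hs : s.Countable) : (closure s : Set G).Countable := by
  have : Countable s := hs.to_subtype
  rw [FreeGroup.closure_eq_range, MonoidHom.coe_range]
  exact Set.countable_range _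

variable [TopologicalSpace G]

theorem eq_top_of_isOpen [SeparatelyContinuousMul G] [ConnectedSpace G] (K : Subgroup G)
    (hK : IsOpen (K : Set G)) : K = ⊤ :=
  SetLike.coe_injective ((OpenSubgroup.isClopen ⟨K, hK⟩).eq_univ ⟨1, K.one_mem⟩)

theorem closure_eq_top_of_mem_nhds_one [SeparatelyContinuousMul G] [ConnectedSpace G]
    {s : Set G} (hs : s ∈ 𝓝 1) : closure s = ⊤ :=
  eq_top_of_isOpen _ (isOpen_of_mem_nhds _ (Filter.mem_of_superset hs subset_closure))

theorem isSeparable_closure [IsTopologicalGroup G] {s : Set G} (hs : IsSeparable s) :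
    IsSeparable (closure s : Set G) := by
  obtain ⟨c, hc, hsc⟩ := hs
  have hs_le : closure s ≤ (closure c).topologicalClosure :=
    closure_le _ |>.mpr <| hsc.trans <| _root_.closure_mono subset_closure
  exact (countable_closure hc).isSeparable.closure.mono hs_le

end Subgroup

theorem separableSpace_of_isSeparable_mem_nhds_one {G : Type*} [Group G] [TopologicalSpace G]
    [IsTopologicalGroup G] [ConnectedSpace G] {s : Set G} (hs : s ∈ 𝓝 1) (hsep : IsSeparable s) :
    SeparableSpace G := by
  rw [← isSeparable_univ_iff, ← Subgroup.coe_top, ← Subgroup.closure_eq_top_of_mem_nhds_one hs]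
  exact Subgroup.isSeparable_closure hsep

theorem MonoidHom.surjective_of_isOpenMap {G H : Type*} [Group G] [TopologicalSpace G] [Group H]
    [TopologicalSpace H] [SeparatelyContinuousMul H] [ConnectedSpace H] (f : G →* H)
    (hf : IsOpenMap f) :
    Function.Surjective f := by
  rw [← MonoidHom.range_eq_top]
  exact f.range.eq_top_of_isOpen (f.coe_range ▸ hf.isOpen_range)

theorem separable_iff_of_coveringMap_general
    {G H : Type*} [TopologicalSpace G] [Group G] [IsTopologicalGroup G] [ConnectedSpace G]
    [TopologicalSpace H] [Group H] [IsTopologicalGroup H] [ConnectedSpace H]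
    (p : G →* H) (hcov : IsCoveringMap p) :
    TopologicalSpace.SeparableSpace G ↔ TopologicalSpace.SeparableSpace H := by
  constructor
  · intro
    exact (p.surjective_of_isOpenMap hcov.isOpenMap).denseRange.separableSpace hcov.continuous
  · intro
    obtain ⟨s, hs, hsep⟩ := hcov.isLocalHomeomorph.exists_isSeparable_mem_nhds 1
    exact separableSpace_of_isSeparable_mem_nhds_one hs hsep

/-- If `p : G → H` is a continuous group homomorphism between connected topological
groups which is a covering map, then `G` is separable iff `H` is separable. -/
theorem separable_iff_of_coveringMap
    {G H : Type*} [TopologicalSpace G] [Group G] [IsTopologicalGroup G] [ConnectedSpace G]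
    [TopologicalSpace H] [Group H] [IsTopologicalGroup H] [ConnectedSpace H]
    (p : G →* H) (hp : Continuous p) (hcov : IsCoveringMap p) :
    TopologicalSpace.SeparableSpace G ↔ TopologicalSpace.SeparableSpace H :=
  separable_iff_of_coveringMap_general p hcov
end

section
/- For every integer n ≥ 2, the alternating group A_n is the maximum proper normal subgroup of the symmetric group S_n: every normal subgroup N of the group of permutations of Fin n with N ≠ S_n is contained in the alternating group A_n. In particular, S_n is relatively simple. -/
open Equiv Equiv.Perm Subgroup

variable {α : Type*} [Fintype α] [DecidableEq α]

/-- A normal subgroup containing a transposition is everything. -/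
lemma aux_swap_top {N : Subgroup (Perm α)} (hN : N.Normal) {a b : α} (hab : a ≠ b)
    (h : Equiv.swap a b ∈ N) : N = ⊤ := by
  rw [eq_top_iff, ← Equiv.Perm.closure_isSwap, Subgroup.closure_le]
  rintro f ⟨x, y, hxy, rfl⟩
  obtain ⟨g, hg⟩ := isConj_iff.mp (Equiv.Perm.isConj_swap hab hxy)
  have h2 := hN.conj_mem _ h g
  rwa [hg] at h2

/-- A normal subgroup containing a three-cycle contains the alternating group. -/
lemma aux_three_le {N : Subgroup (Perm α)} (hN : N.Normal) {c : Perm α}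
    (hc : c.IsThreeCycle) (h : c ∈ N) : alternatingGroup α ≤ N := by
  rw [← Equiv.Perm.closure_three_cycles_eq_alternating, Subgroup.closure_le]
  intro f hf
  obtain ⟨g, hg⟩ := isConj_iff.mp (Equiv.Perm.isConj_iff_cycleType_eq.mpr
    (hc.cycleType.trans (hf : f.IsThreeCycle).cycleType.symm))
  have h2 := hN.conj_mem _ h g
  rwa [hg] at h2

/-- A subgroup containing the alternating group and an odd permutation is everything. -/
lemma aux_alt_top {N : Subgroup (Perm α)} (hle : alternatingGroup α ≤ N) {σ : Perm α}
    (hσN : σ ∈ N) (hσ : Equiv.Perm.sign σ = -1) : N = ⊤ := by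
  rw [eq_top_iff]
  intro g _
  rcases Int.units_eq_one_or (Equiv.Perm.sign g) with h | h
  · exact hle (Equiv.Perm.mem_alternatingGroup.mpr h)
  · have hmem : g * σ⁻¹ ∈ alternatingGroup α := by
      rw [Equiv.Perm.mem_alternatingGroup, map_mul, map_inv, h, hσ]
      rfl
    have h2 := N.mul_mem (hle hmem) hσN
    simpa using h2

/-- A normal subgroup of the permutation group containing an odd permutation is everything. -/
lemma aux_odd_top {N : Subgroup (Perm α)} (hN : N.Normal) {σ : Perm α}
    (hσN : σ ∈ N) (hσ : Equiv.Perm.sign σ = -1) : N = ⊤ := by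
  classical
  -- commutator with a transposition
  have mem2 : ∀ ρ ∈ N, ∀ x y : α, Equiv.swap (ρ x) (ρ y) * Equiv.swap x y ∈ N := by
    intro ρ hρ x y
    have h1 : Equiv.swap x y * ρ⁻¹ * (Equiv.swap x y)⁻¹ ∈ N :=
      hN.conj_mem _ (N.inv_mem hρ) _
    have h2 := N.mul_mem hρ h1
    rwa [show ρ * (Equiv.swap x y * ρ⁻¹ * (Equiv.swap x y)⁻¹)
        = Equiv.swap (ρ x) (ρ y) * Equiv.swap x y by
      rw [Equiv.swap_apply_apply, Equiv.swap_inv]; simp [mul_assoc]] at h2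
  by_cases hA : ∃ a : α, σ (σ a) ≠ a
  · -- σ has a cycle of length ≥ 3: produce a three-cycle in N
    obtain ⟨a, ha2⟩ := hA
    have ha1 : σ a ≠ a := fun h => ha2 (by rw [h, h])
    have h3 := mem2 σ hσN a (σ a)
    have hthree : IsThreeCycle (Equiv.swap (σ a) (σ (σ a)) * Equiv.swap a (σ a)) := by
      rw [Equiv.swap_comm a (σ a)]
      exact Equiv.Perm.isThreeCycle_swap_mul_swap_same
        (fun h => ha1 (σ.injective h).symm) ha1 ha2
    exact aux_alt_top (aux_three_le hN hthree h3) hσN hσ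
  · push_neg at hA
    -- σ is an involution
    have hne : ∃ a : α, σ a ≠ a := by
      by_contra h
      push_neg at h
      have : σ = 1 := Equiv.ext fun x => h x
      rw [this] at hσ
      simp at hσ
    obtain ⟨a, ha1⟩ := hne
    by_cases hB : ∃ b : α, σ b ≠ b ∧ b ≠ a ∧ b ≠ σ a
    · obtain ⟨b, hb1, hba, hbsa⟩ := hB
      -- four distinct points a, σ a, b, σ b
      have hsab : σ a ≠ b := fun h => hbsa h.symm
      have hsba : σ b ≠ a := fun h => hbsa (by rw [← h, hA b])
      have hsbsa : σ b ≠ σ a := fun h => hba (σ.injective h)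
      have hsbb : σ b ≠ b := hb1
      -- π = swap a (σ b) * swap (σ a) b ∈ N
      have hπ : Equiv.swap a (σ b) * Equiv.swap (σ a) b ∈ N := by
        have := mem2 σ hσN (σ a) b
        rwa [hA a] at this
      set π := Equiv.swap a (σ b) * Equiv.swap (σ a) b with hπdef
      by_cases hE : ∃ e : α, e ≠ a ∧ e ≠ b ∧ e ≠ σ a ∧ e ≠ σ b
      · obtain ⟨e, hea, heb, hesa, hesb⟩ := hE
        have hπsb : π (σ b) = a := by
          rw [hπdef]
          simp only [Equiv.Perm.mul_apply]
          rw [Equiv.swap_apply_of_ne_of_ne hsbsa hsbb, Equiv.swap_apply_right]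
        have hπe : π e = e := by
          rw [hπdef]
          simp only [Equiv.Perm.mul_apply]
          rw [Equiv.swap_apply_of_ne_of_ne hesa heb, Equiv.swap_apply_of_ne_of_ne hea hesb]
        have h3 := mem2 π hπ (σ b) e
        rw [hπsb, hπe] at h3
        have hthree : IsThreeCycle (Equiv.swap a e * Equiv.swap (σ b) e) := by
          rw [Equiv.swap_comm a e, Equiv.swap_comm (σ b) e]
          exact Equiv.Perm.isThreeCycle_swap_mul_swap_same hea hesb
            (fun h => hsba h.symm)
        exact aux_alt_top (aux_three_le hN hthree h3) hσN hσ
      · -- no fifth point: σ would be even, contradiction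
        exfalso
        push_neg at hE
        have hx4 : ∀ x : α, x = a ∨ x = b ∨ x = σ a ∨ x = σ b := by
          intro x
          by_cases h1 : x = a; · exact Or.inl h1
          by_cases h2 : x = b; · exact Or.inr (Or.inl h2)
          by_cases h3 : x = σ a; · exact Or.inr (Or.inr (Or.inl h3))
          exact Or.inr (Or.inr (Or.inr (hE x h1 h2 h3)))
        have hσeq : σ = Equiv.swap a (σ a) * Equiv.swap b (σ b) := by
          ext x
          rcases hx4 x with rfl | rfl | rfl | rfl
          · simp only [Equiv.Perm.mul_apply]
            rw [Equiv.swap_apply_of_ne_of_ne hba.symm hsba.symm, Equiv.swap_apply_left]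
          · simp only [Equiv.Perm.mul_apply]
            rw [Equiv.swap_apply_left, Equiv.swap_apply_of_ne_of_ne hsba hsbsa]
          · simp only [Equiv.Perm.mul_apply]
            rw [Equiv.swap_apply_of_ne_of_ne hsab hsbsa.symm, Equiv.swap_apply_right,
              hA a]
          · simp only [Equiv.Perm.mul_apply]
            rw [Equiv.swap_apply_right, Equiv.swap_apply_of_ne_of_ne hba hbsa, hA b]
        rw [hσeq, map_mul, Equiv.Perm.sign_swap (fun h => ha1 h.symm),
          Equiv.Perm.sign_swap (fun h => hb1 h.symm)] at hσ
        norm_num at hσ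
    · -- σ is a transposition
      push_neg at hB
      have hσeq : σ = Equiv.swap a (σ a) := by
        ext x
        by_cases hx : σ x = x
        · have h1 : x ≠ a := fun h => ha1 (h ▸ hx)
          have h2 : x ≠ σ a := fun h => ha1 (by rw [h] at hx; rw [hA a] at hx; exact hx.symm)
          rw [hx, Equiv.swap_apply_of_ne_of_ne h1 h2]
        · by_cases hxa : x = a
          · subst hxa; rw [Equiv.swap_apply_left]
          · have hxsa : x = σ a := hB x hx hxa
            subst hxsa
            rw [Equiv.swap_apply_right]
            exact hA a
      exact aux_swap_top hN (fun h => ha1 h.symm) (hσeq ▸ hσN)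

/-- For `n ≥ 2`, the alternating group `A_n` is the maximum proper normal subgroup of the
symmetric group `S_n`: `A_n` is proper, and every normal subgroup `N ≠ ⊤` of `S_n` is
contained in `A_n`.  In particular `S_n` is relatively simple. -/
theorem alternatingGroup_is_maximum_normal_subgroup (n : ℕ) (hn : 2 ≤ n) :
    alternatingGroup (Fin n) ≠ ⊤ ∧
    ∀ N : Subgroup (Equiv.Perm (Fin n)), N.Normal → N ≠ ⊤ →
      N ≤ alternatingGroup (Fin n) := by
  have h01 : (⟨0, by omega⟩ : Fin n) ≠ ⟨1, by omega⟩ := by simp [Fin.ext_iff]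
  constructor
  · intro h
    have hmem : Equiv.swap (⟨0, by omega⟩ : Fin n) ⟨1, by omega⟩ ∈ alternatingGroup (Fin n) :=
      h.symm ▸ Subgroup.mem_top _
    rw [Equiv.Perm.mem_alternatingGroup, Equiv.Perm.sign_swap h01] at hmem
    norm_num at hmem
  · intro N hN hNtop
    by_contra hle
    obtain ⟨σ, hσN, hσA⟩ := SetLike.not_le_iff_exists.mp hle
    rcases Int.units_eq_one_or (Equiv.Perm.sign σ) with h | h
    · exact hσA (Equiv.Perm.mem_alternatingGroup.mpr h)
    · exact hNtop (aux_odd_top hN hσN h)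
end

section
/- Let l and k be positive integers with l ≤ k and l ≡ k (mod 2), and let n be an integer with n ≥ 2k. Then in the symmetric group of permutations of Fin n, the permutation ι_l can be written as a product of three permutations, each of which is conjugate to ι_k. -/
/-- `iotaFin n k` is the permutation `(1,2)(3,4)⋯(2k−1,2k)` of `Fin n`, i.e. the product
of the `k` disjoint transpositions swapping `2i` and `2i+1` for `i = 0, …, k−1`. -/
def iotaFin (n k : ℕ) : Equiv.Perm (Fin n) :=
  ((List.range k).map fun i =>
    if h : 2 * i + 1 < n then
      Equiv.swap (⟨2 * i, by omega⟩ : Fin n) ⟨2 * i + 1, h⟩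
    else 1).prod

/-!
Write `k = l + 2m` and split the points `2l, …, 2l + 4m - 1` into `m` consecutive blocks
of four. In terms of the offset `y` from `2l`, `ι_k` acts there as `y ↦ y xor 1`, and the
maps `y ↦ y xor c` for `c = 1, 2, 3` are the three involutions of the Klein four-group
acting on each block, whose product is the identity. Extending each of them by `ι_l` on
`[0, 2l)` gives involutions `σ₁ = ι_k, σ₂, σ₃` moving exactly the first `2k` points, hence
all conjugate to `ι_k`, and `σ₁ σ₂ σ₃ = ι_l³ = ι_l`.
-/

open Equiv Finset

namespace Nat

theorem xor_div_two_pow_of_lt {y c j : ℕ} (hc : c < 2 ^ j) : (y ^^^ c) / 2 ^ j = y / 2 ^ j := by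
  rw [Nat.xor_div_two_pow, Nat.div_eq_of_lt hc, Nat.xor_zero]

theorem xor_lt_two_pow_mul {y c b j : ℕ} (hy : y < 2 ^ j * b) (hc : c < 2 ^ j) :
    y ^^^ c < 2 ^ j * b := by
  rw [mul_comm, ← Nat.div_lt_iff_lt_mul (by positivity)] at hy ⊢
  rwa [xor_div_two_pow_of_lt hc]

theorem xor_one_lt_two_mul {x l : ℕ} (hx : x < 2 * l) : x ^^^ 1 < 2 * l :=
  xor_lt_two_pow_mul (j := 1) hx (by norm_num)

theorem xor_lt_four_mul {y c m : ℕ} (hy : y < 4 * m) (hc : c < 4) : y ^^^ c < 4 * m :=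
  xor_lt_two_pow_mul (j := 2) hy hc

theorem two_mul_add_xor_one (a y : ℕ) : (2 * a + y) ^^^ 1 = 2 * a + (y ^^^ 1) := by
  rcases Nat.even_or_odd y with hy | hy
  · rw [xor_one_of_even hy, xor_one_of_even (by simpa [Nat.even_add] using hy)]; omega
  · rw [xor_one_of_odd hy, xor_one_of_odd (by simpa [Nat.odd_add'] using hy)]
    have := hy.pos; omega

theorem lt_or_exists_add_or_le (a b x : ℕ) :
    x < a ∨ (∃ y < b, x = a + y) ∨ a + b ≤ x := by
  rcases lt_or_ge x a with h | h
  · exact Or.inl h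
  rcases lt_or_ge x (a + b) with h' | h'
  · exact Or.inr (Or.inl ⟨x - a, by omega, by omega⟩)
  · exact Or.inr (Or.inr h')

end Nat

theorem iotaFin_succ (n k : ℕ) : iotaFin n (k + 1) = iotaFin n k *
    if h : 2 * k + 1 < n then swap (⟨2 * k, by omega⟩ : Fin n) ⟨2 * k + 1, h⟩ else 1 := by
  simp [iotaFin, List.range_succ]

theorem iotaFin_apply {n k : ℕ} (hk : 2 * k ≤ n) (x : Fin n) :
    (iotaFin n k x : ℕ) = if (x : ℕ) < 2 * k then (x : ℕ) ^^^ 1 else x := by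
  induction k generalizing x with
  | zero => simp [iotaFin]
  | succ k ih =>
    have hk' : 2 * k + 1 < n := by omega
    rw [iotaFin_succ, dif_pos hk', Perm.mul_apply]
    rcases eq_or_ne x ⟨2 * k, by omega⟩ with rfl | h₀
    · rw [swap_apply_left, ih (by omega), if_neg (by simp), if_pos (by simp),
        Nat.xor_one_of_even (even_two_mul k)]
    rcases eq_or_ne x ⟨2 * k + 1, hk'⟩ with rfl | h₁
    · rw [swap_apply_right, ih (by omega), if_neg (by simp), if_pos (by simp; omega),
        Nat.xor_one_of_odd (odd_two_mul_add_one k)]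
      rfl
    have h₀' : (x : ℕ) ≠ 2 * k := Fin.val_ne_of_ne h₀
    have h₁' : (x : ℕ) ≠ 2 * k + 1 := Fin.val_ne_of_ne h₁
    rw [swap_apply_of_ne_of_ne h₀ h₁, ih (by omega)]
    exact if_congr (by omega) rfl rfl

namespace Equiv.Perm

variable {α : Type*} [Fintype α] [DecidableEq α]

theorem cycleType_eq_replicate_of_sq_eq_one {σ : Perm α} (hσ : σ ^ 2 = 1) :
    σ.cycleType = Multiset.replicate (#σ.support / 2) 2 := by
  have h := cycleType_of_pow_prime_eq_one hσ
  rw [h]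
  congr 1
  rw [← sum_cycleType, h, Multiset.card_replicate, Multiset.sum_replicate, smul_eq_mul,
    Nat.mul_div_cancel _ two_pos]

theorem isConj_of_sq_eq_one {σ τ : Perm α} (hσ : σ ^ 2 = 1) (hτ : τ ^ 2 = 1)
    (h : #σ.support = #τ.support) : IsConj σ τ := by
  rw [isConj_iff_cycleType_eq, cycleType_eq_replicate_of_sq_eq_one hσ,
    cycleType_eq_replicate_of_sq_eq_one hτ, h]

end Equiv.Perm

def kleinFun (l m c x : ℕ) : ℕ :=
  if x < 2 * l then x ^^^ 1 else if x < 2 * l + 4 * m then 2 * l + ((x - 2 * l) ^^^ c) else x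

section kleinFun

variable {l m c x : ℕ}

theorem kleinFun_of_lt (hx : x < 2 * l) : kleinFun l m c x = x ^^^ 1 := if_pos hx

theorem kleinFun_two_mul_add {y : ℕ} (hy : y < 4 * m) :
    kleinFun l m c (2 * l + y) = 2 * l + (y ^^^ c) := by
  rw [kleinFun, if_neg (by omega), if_pos (by omega), Nat.add_sub_cancel_left]

theorem kleinFun_of_le (hx : 2 * l + 4 * m ≤ x) : kleinFun l m c x = x := by
  rw [kleinFun, if_neg (by omega), if_neg (by omega)]

theorem kleinFun_lt {N : ℕ} (hc : c < 4) (hN : 2 * l + 4 * m ≤ N) (hx : x < N) :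
    kleinFun l m c x < N := by
  rcases Nat.lt_or_exists_add_or_le (2 * l) (4 * m) x with h | ⟨y, hy, rfl⟩ | h
  · rw [kleinFun_of_lt h]
    have := Nat.xor_one_lt_two_mul h
    omega
  · rw [kleinFun_two_mul_add hy]
    have := Nat.xor_lt_four_mul hy hc
    omega
  · rwa [kleinFun_of_le h]

theorem kleinFun_involutive (hc : c < 4) : Function.Involutive (kleinFun l m c) := by
  intro x
  rcases Nat.lt_or_exists_add_or_le (2 * l) (4 * m) x with h | ⟨y, hy, rfl⟩ | h
  · rw [kleinFun_of_lt h, kleinFun_of_lt (Nat.xor_one_lt_two_mul h), xor_cancel_right]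
  · rw [kleinFun_two_mul_add hy, kleinFun_two_mul_add (Nat.xor_lt_four_mul hy hc),
      xor_cancel_right]
  · rw [kleinFun_of_le h, kleinFun_of_le h]

theorem kleinFun_eq_self_iff (hc : c ≠ 0) : kleinFun l m c x = x ↔ 2 * l + 4 * m ≤ x := by
  rcases Nat.lt_or_exists_add_or_le (2 * l) (4 * m) x with h | ⟨y, hy, rfl⟩ | h
  · rw [kleinFun_of_lt h, xor_left_eq_self_iff]
    omega
  · rw [kleinFun_two_mul_add hy, Nat.add_left_cancel_iff, xor_left_eq_self_iff]
    omega
  · simp only [kleinFun_of_le h, h]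

theorem kleinFun_one : kleinFun l m 1 x = if x < 2 * (l + 2 * m) then x ^^^ 1 else x := by
  rcases Nat.lt_or_exists_add_or_le (2 * l) (4 * m) x with h | ⟨y, hy, rfl⟩ | h
  · rw [kleinFun_of_lt h, if_pos (by omega)]
  · rw [kleinFun_two_mul_add hy, if_pos (by omega), Nat.two_mul_add_xor_one]
  · rw [kleinFun_of_le h, if_neg (by omega)]

theorem kleinFun_one_two_three :
    kleinFun l m 1 (kleinFun l m 2 (kleinFun l m 3 x)) = if x < 2 * l then x ^^^ 1 else x := by
  rcases Nat.lt_or_exists_add_or_le (2 * l) (4 * m) x with h | ⟨y, hy, rfl⟩ | h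
  · have h' := Nat.xor_one_lt_two_mul h
    rw [kleinFun_of_lt h, kleinFun_of_lt h', kleinFun_of_lt (by rwa [xor_cancel_right]),
      if_pos h, xor_cancel_right]
  · have hy₃ := Nat.xor_lt_four_mul hy (c := 3) (by norm_num)
    rw [kleinFun_two_mul_add hy, kleinFun_two_mul_add hy₃,
      kleinFun_two_mul_add (Nat.xor_lt_four_mul hy₃ (by norm_num)), if_neg (by omega),
      Nat.xor_assoc, Nat.xor_assoc, show (3 ^^^ (2 ^^^ 1) : ℕ) = 0 by decide, Nat.xor_zero]
  · rw [kleinFun_of_le h, kleinFun_of_le h, kleinFun_of_le h, if_neg (by omega)]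

end kleinFun

def kleinPerm (n l m c : ℕ) (hc : c < 4) (hn : 2 * l + 4 * m ≤ n) : Perm (Fin n) :=
  Function.Involutive.toPerm (fun x => ⟨kleinFun l m c x, kleinFun_lt hc hn x.2⟩)
    fun x => Fin.ext (kleinFun_involutive hc x)

section kleinPerm

variable {n l m c : ℕ} (hc : c < 4) (hn : 2 * l + 4 * m ≤ n)

@[simp] theorem kleinPerm_apply_val (x : Fin n) :
    (kleinPerm n l m c hc hn x : ℕ) = kleinFun l m c x :=
  rfl

theorem kleinPerm_sq : kleinPerm n l m c hc hn ^ 2 = 1 := by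
  ext x
  simp [sq, kleinFun_involutive hc _]

theorem card_support_kleinPerm (hc₀ : c ≠ 0) :
    #(kleinPerm n l m c hc hn).support = 2 * l + 4 * m := by
  have hsupp : (kleinPerm n l m c hc hn).support =
      ({x : Fin n | (x : ℕ) < 2 * l + 4 * m} : Finset (Fin n)) := by
    ext x
    simp [Perm.mem_support, Fin.ext_iff, kleinFun_eq_self_iff hc₀]
  rw [hsupp, Fin.card_filter_val_lt, min_eq_right hn]

theorem isConj_kleinPerm {c' : ℕ} (hc' : c' < 4) (hc₀ : c ≠ 0) (hc₀' : c' ≠ 0) :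
    IsConj (kleinPerm n l m c hc hn) (kleinPerm n l m c' hc' hn) :=
  Perm.isConj_of_sq_eq_one (kleinPerm_sq hc hn) (kleinPerm_sq hc' hn)
    (by rw [card_support_kleinPerm hc hn hc₀, card_support_kleinPerm hc' hn hc₀'])

end kleinPerm

theorem iotaFin_eq_kleinPerm_one {n l m : ℕ} (hn : 2 * l + 4 * m ≤ n) :
    iotaFin n (l + 2 * m) = kleinPerm n l m 1 (by norm_num) hn := by
  ext x
  rw [iotaFin_apply (by omega), kleinPerm_apply_val, kleinFun_one]

theorem iotaFin_eq_kleinPerm_mul {n l m : ℕ} (hn : 2 * l + 4 * m ≤ n) :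
    iotaFin n l = kleinPerm n l m 1 (by norm_num) hn * kleinPerm n l m 2 (by norm_num) hn *
      kleinPerm n l m 3 (by norm_num) hn := by
  ext x
  rw [iotaFin_apply (by omega)]
  simp only [Perm.mul_apply, kleinPerm_apply_val, kleinFun_one_two_three]

theorem iota_prod_three_conjugates_general (l k n : ℕ) (hlk : l ≤ k)
    (hpar : l % 2 = k % 2) (hn : 2 * k ≤ n) :
    ∃ σ₁ σ₂ σ₃ : Equiv.Perm (Fin n),
      IsConj (iotaFin n k) σ₁ ∧ IsConj (iotaFin n k) σ₂ ∧ IsConj (iotaFin n k) σ₃ ∧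
      iotaFin n l = σ₁ * σ₂ * σ₃ := by
  obtain ⟨m, rfl⟩ : ∃ m, k = l + 2 * m := ⟨(k - l) / 2, by omega⟩
  have hn' : 2 * l + 4 * m ≤ n := by omega
  rw [iotaFin_eq_kleinPerm_one hn']
  exact ⟨_, _, _, isConj_kleinPerm _ hn' _ one_ne_zero one_ne_zero,
    isConj_kleinPerm _ hn' _ one_ne_zero two_ne_zero,
    isConj_kleinPerm _ hn' _ one_ne_zero three_ne_zero, iotaFin_eq_kleinPerm_mul hn'⟩

/-- Lemma 8.1: if `0 < l ≤ k`, `l` and `k` have the same parity, and `n ≥ 2k`, then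
`ι_l` is a product of three permutations of `Fin n` each conjugate to `ι_k`. -/
theorem iota_prod_three_conjugates (l k n : ℕ) (hl : 0 < l) (hlk : l ≤ k)
    (hpar : l % 2 = k % 2) (hn : 2 * k ≤ n) :
    ∃ σ₁ σ₂ σ₃ : Equiv.Perm (Fin n),
      IsConj (iotaFin n k) σ₁ ∧ IsConj (iotaFin n k) σ₂ ∧ IsConj (iotaFin n k) σ₃ ∧
      iotaFin n l = σ₁ * σ₂ * σ₃ :=
  iota_prod_three_conjugates_general l k n hlk hpar hn
end

section
/- Let m and n be odd integers greater than 1, and let N be an integer with N ≥ 2mn. Then in the symmetric group of permutations of Fin N, q_{ι_n}(ι_{mn}) = m: the permutation ι_{mn} is a product of m permutations each conjugate to ι_n, and ι_{mn} is not a product of fewer than m elements each conjugate to ι_n or to ι_n⁻¹. -/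
/-- `qnorm x g` is the least number `n` such that `g` is a product of `n` elements,
each conjugate to `x` or to `x⁻¹`. -/
noncomputable def qnorm {G : Type*} [Group G] (x g : G) : ℕ :=
  sInf {n | ∃ L : List G, L.length = n ∧ (∀ y ∈ L, IsConj x y ∨ IsConj x⁻¹ y) ∧ L.prod = g}

/-! `ι_{mn}` is the product of `m` consecutive blocks of `n` transpositions, and each block is
the conjugate of `ι_n` by a translation of `Fin N`; this gives `q ≤ m`. Conversely, every
conjugate of `ι_n^{±1}` moves exactly `2n` points while `ι_{mn}` moves `2mn`, and the support of a
product lies in the union of the supports, so at least `m` factors are needed. -/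

open Equiv Finset

def swapPair (N i : ℕ) : Perm (Fin N) :=
  if h : 2 * i + 1 < N then swap (⟨2 * i, by omega⟩ : Fin N) ⟨2 * i + 1, h⟩ else 1

lemma iotaFin_eq_prod_swapPair (N k : ℕ) :
    iotaFin N k = ((List.range k).map (swapPair N)).prod := rfl

lemma iotaFin_add (N a b : ℕ) :
    iotaFin N (a + b) = iotaFin N a * ((List.range b).map fun i => swapPair N (a + i)).prod := by
  simp only [iotaFin_eq_prod_swapPair, List.range_add, List.map_append, List.prod_append,
    List.map_map, Function.comp_def]

lemma iotaFin_succ_s13 (N k : ℕ) : iotaFin N (k + 1) = iotaFin N k * swapPair N k := by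
  simp [iotaFin_add]

lemma swapPair_apply_of_ne {N i : ℕ} {x : Fin N} (h₀ : x.val ≠ 2 * i) (h₁ : x.val ≠ 2 * i + 1) :
    swapPair N i x = x := by
  unfold swapPair
  split
  · exact swap_apply_of_ne_of_ne (fun h => h₀ (by rw [h])) (fun h => h₁ (by rw [h]))
  · rfl

lemma iotaFin_apply_of_le {N k : ℕ} {x : Fin N} (hx : 2 * k ≤ x.val) : iotaFin N k x = x := by
  induction k with
  | zero => rfl
  | succ k ih =>
    rw [iotaFin_succ_s13, Perm.mul_apply, swapPair_apply_of_ne (by omega) (by omega), ih (by omega)]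

lemma disjoint_iotaFin_swapPair (N k : ℕ) : (iotaFin N k).Disjoint (swapPair N k) := by
  intro x
  by_cases hx : 2 * k ≤ x.val
  · exact .inl (iotaFin_apply_of_le hx)
  · exact .inr (swapPair_apply_of_ne (by omega) (by omega))

lemma card_support_swapPair {N i : ℕ} (h : 2 * i + 1 < N) : #(swapPair N i).support = 2 := by
  rw [swapPair, dif_pos h, Perm.card_support_swap (by simp [Fin.ext_iff])]

lemma card_support_iotaFin {N k : ℕ} (hk : 2 * k ≤ N) : #(iotaFin N k).support = 2 * k := by
  induction k with
  | zero => simp [iotaFin]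
  | succ k ih =>
    rw [iotaFin_succ_s13, (disjoint_iotaFin_swapPair N k).card_support_mul, ih (by omega),
      card_support_swapPair (by omega), mul_add_one]

lemma addRight_mul_swapPair_mul_inv {N : ℕ} [NeZero N] {a i : ℕ} (h : 2 * (a + i) + 1 < N) :
    Equiv.addRight (⟨2 * a, by omega⟩ : Fin N) * swapPair N i *
      (Equiv.addRight (⟨2 * a, by omega⟩ : Fin N))⁻¹ = swapPair N (a + i) := by
  rw [swapPair, swapPair, dif_pos (by omega), dif_pos h, ← swap_apply_apply]
  congr 1 <;> ext <;> simp only [coe_addRight, Fin.val_add] <;>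
    rw [Nat.mod_eq_of_lt (by omega)] <;> ring

lemma isConj_iotaFin_prod_swapPair_add {N a b : ℕ} (h : 2 * (a + b) ≤ N) :
    IsConj (iotaFin N b) ((List.range b).map fun i => swapPair N (a + i)).prod := by
  rcases Nat.eq_zero_or_pos b with rfl | hb
  · rfl
  have : NeZero N := ⟨by omega⟩
  refine isConj_iff.mpr ⟨Equiv.addRight ⟨2 * a, by omega⟩, ?_⟩
  rw [iotaFin_eq_prod_swapPair, ← MulAut.conj_apply, map_list_prod, List.map_map]
  congr 1
  refine List.map_congr_left fun i hi => ?_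
  exact addRight_mul_swapPair_mul_inv (by simp at hi; omega)

lemma exists_list_isConj_prod_eq_iotaFin_mul {N m n : ℕ} (h : 2 * (m * n) ≤ N) :
    ∃ L : List (Perm (Fin N)), L.length = m ∧
      (∀ σ ∈ L, IsConj (iotaFin N n) σ) ∧ L.prod = iotaFin N (m * n) := by
  induction m with
  | zero => exact ⟨[], rfl, by simp, by simp [iotaFin]⟩
  | succ m ih =>
    obtain ⟨L, hlen, hconj, hprod⟩ := ih (by nlinarith)
    refine ⟨L ++ [_], by simp [hlen], ?_, by
      rw [List.prod_append, List.prod_singleton, hprod, Nat.succ_mul, iotaFin_add]⟩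
    rintro σ hσ
    rcases List.mem_append.mp hσ with hσ | hσ
    · exact hconj σ hσ
    · rw [List.mem_singleton.mp hσ]
      exact isConj_iotaFin_prod_swapPair_add (by nlinarith)

lemma qnorm_le_length {G : Type*} [Group G] {x : G} {L : List G}
    (hL : ∀ y ∈ L, IsConj x y ∨ IsConj x⁻¹ y) : qnorm x L.prod ≤ L.length :=
  Nat.sInf_le ⟨L, rfl, hL, rfl⟩

namespace Equiv.Perm

variable {α : Type*} [Fintype α] [DecidableEq α]

lemma card_support_list_prod_le {c : ℕ} {L : List (Perm α)} (h : ∀ σ ∈ L, #σ.support ≤ c) :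
    #L.prod.support ≤ c * L.length := by
  induction L with
  | nil => simp
  | cons σ L ih =>
    rw [List.prod_cons, List.length_cons, mul_add_one, add_comm]
    calc #(σ * L.prod).support ≤ #(σ.support ∪ L.prod.support) :=
          card_le_card (support_mul_le σ L.prod)
      _ ≤ #σ.support + #L.prod.support := card_union_le _ _
      _ ≤ c + c * L.length :=
          add_le_add (h σ List.mem_cons_self) (ih fun τ hτ => h τ (List.mem_cons_of_mem _ hτ))

lemma _root_.IsConj.card_support_eq {σ τ : Perm α} (h : IsConj σ τ) :
    #σ.support = #τ.support := by
  rw [← sum_cycleType, ← sum_cycleType, isConj_iff_cycleType_eq.mp h]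

lemma card_support_le_mul_qnorm {x g : Perm α}
    (hg : ∃ L : List (Perm α), (∀ y ∈ L, IsConj x y ∨ IsConj x⁻¹ y) ∧ L.prod = g) :
    #g.support ≤ #x.support * qnorm x g := by
  obtain ⟨L₀, hL₀, hprod₀⟩ := hg
  obtain ⟨L, hlen, hL, rfl⟩ := Nat.sInf_mem (s := {n | ∃ L : List (Perm α), L.length = n ∧
    (∀ y ∈ L, IsConj x y ∨ IsConj x⁻¹ y) ∧ L.prod = g}) ⟨_, L₀, rfl, hL₀, hprod₀⟩
  rw [qnorm, ← hlen]
  refine card_support_list_prod_le fun y hy => (hL y hy).elim (fun h => h.card_support_eq.ge) ?_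
  exact fun h => by rw [← h.card_support_eq, support_inv]

end Equiv.Perm

theorem qnorm_iota_iota_mul_eq_general (m n N : ℕ)
    (hn1 : 1 < n) (hN : 2 * (m * n) ≤ N) :
    qnorm (iotaFin N n) (iotaFin N (m * n)) = m ∧
    ∃ L : List (Equiv.Perm (Fin N)), L.length = m ∧
      (∀ σ ∈ L, IsConj (iotaFin N n) σ) ∧ L.prod = iotaFin N (m * n) := by
  obtain ⟨L, hlen, hconj, hprod⟩ := exists_list_isConj_prod_eq_iotaFin_mul hN
  have hconj' : ∀ σ ∈ L, IsConj (iotaFin N n) σ ∨ IsConj (iotaFin N n)⁻¹ σ :=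
    fun σ hσ => .inl (hconj σ hσ)
  have hle := qnorm_le_length hconj'
  rw [hprod, hlen] at hle
  refine ⟨le_antisymm hle ?_, L, hlen, hconj, hprod⟩
  rcases Nat.eq_zero_or_pos m with rfl | hm
  · exact Nat.zero_le _
  have hge := Perm.card_support_le_mul_qnorm ⟨L, hconj', hprod⟩
  rw [card_support_iotaFin hN, card_support_iotaFin (by nlinarith)] at hge
  nlinarith

/-- Lemma 8.4(2): for odd `m, n > 1` and `N ≥ 2mn`, one has `q_{ι_n}(ι_{mn}) = m` in the
symmetric group of `Fin N`; in particular `ι_{mn}` is a product of `m` conjugates of `ι_n`. -/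
theorem qnorm_iota_iota_mul_eq (m n N : ℕ)
    (hm : Odd m) (hm1 : 1 < m) (hn : Odd n) (hn1 : 1 < n) (hN : 2 * (m * n) ≤ N) :
    qnorm (iotaFin N n) (iotaFin N (m * n)) = m ∧
    ∃ L : List (Equiv.Perm (Fin N)), L.length = m ∧
      (∀ σ ∈ L, IsConj (iotaFin N n) σ) ∧ L.prod = iotaFin N (m * n) :=
  qnorm_iota_iota_mul_eq_general m n N hn1 hN
end

section
/- Let σ be a permutation of ℕ that is a cycle whose support is finite of cardinality n ≥ 2. Then there exist an integer k with k ≥ ⌈n/6⌉ and permutations σ₁, σ₂, σ₃ of ℕ, each conjugate to σ, such that ι_k = σ₁ σ₂ σ₃. -/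
/-- `iotaNat k` is the permutation `(1,2)(3,4)⋯(2k−1,2k)` of `ℕ`, i.e. the product of the
`k` disjoint transpositions swapping `2i` and `2i+1` for `i = 0, …, k−1`. -/
def iotaNat (k : ℕ) : Equiv.Perm ℕ :=
  ((List.range k).map fun i => Equiv.swap (2 * i) (2 * i + 1)).prod

/-!
For `n ≥ 4` choose `k` with `2k ≤ n` and `n - k` odd. Let `A` be the `n`-cycle `x ↦ x + 1`
on `{0, …, n - 1}`. Multiplying `A` on the left by the transpositions `(2i 2i+1)` cuts the points
`2i` out of the cycle one at a time, so `ι_k A` is an `(n - k)`-cycle fixing the even points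
below `2k`. A cycle `f` of odd order is the square of the cycle `f ^ ((ord f + 1) / 2)`, and a
factorisation `f = p q` into cycles with the support of `f` grows by any fixed point `e` of `f`
as `f = (p (a e)) ((a e) q)` with `a` in the support. Adding the `k` even points gives
`ι_k A = P Q` with `n`-cycles `P`, `Q`, hence `ι_k = P Q A⁻¹`; finitely supported cycles of the
same length are conjugate. For `n = 3` parity forces `k = 2`, so `n = 2, 3` are done by hand.
-/

open Equiv Finset

namespace Equiv.Perm

variable {α : Type*}

theorem setOf_inv_apply_ne (f : Perm α) : {x | f⁻¹ x ≠ x} = {x | f x ≠ x} :=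
  Set.ext fun _ => not_congr (inv_eq_iff_eq.trans eq_comm)

theorem SameCycle.of_forall_sameCycle_apply {f g : Perm α} (h : ∀ x, f.SameCycle x (g x))
    {x y : α} (hxy : g.SameCycle x y) : f.SameCycle x y := by
  obtain ⟨i, rfl⟩ := hxy
  induction i using Int.induction_on with
  | zero => exact SameCycle.refl f x
  | succ i ih => rw [add_comm, zpow_add, zpow_one, mul_apply]; exact ih.trans (h _)
  | pred i ih =>
    have hstep := h ((g ^ (-(i : ℤ) - 1)) x)
    rw [← mul_apply, ← zpow_one_add, add_sub_cancel] at hstep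
    exact ih.trans hstep.symm

theorem IsCycle.exists_isCycle_mul_self_eq {f : Perm α} (hf : f.IsCycle) (hodd : Odd (orderOf f)) :
    ∃ g : Perm α, g.IsCycle ∧ {x | g x ≠ x} = {x | f x ≠ x} ∧ g * g = f := by
  obtain ⟨m, hm⟩ := hodd
  set g := f ^ (m + 1)
  have hgg : g * g = f := by
    rw [← pow_add, show m + 1 + (m + 1) = orderOf f + 1 by omega, pow_succ, pow_orderOf_eq_one,
      one_mul]
  have hfix (x : α) : g x = x ↔ f x = x :=
    ⟨fun h => by rw [← hgg, mul_apply, h, h], fun h => pow_apply_eq_self_of_apply_eq_self h _⟩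
  have hsupp : {x | g x ≠ x} = {x | f x ≠ x} := Set.ext fun x => not_congr (hfix x)
  refine ⟨g, ?_, hsupp, hgg⟩
  obtain ⟨a, ha, hcyc⟩ := hf
  refine ⟨a, mt (hfix a).1 ha, fun y hy => ?_⟩
  exact SameCycle.of_pow (n := 2) (by rw [sq, hgg]; exact hcyc (mt (hfix y).2 hy))

theorem IsCycle.pow_ncard_eq_one {f : Perm α} (hf : f.IsCycle) (hfin : {x | f x ≠ x}.Finite) :
    f ^ {x | f x ≠ x}.ncard = 1 := by
  have hon : f.IsCycleOn ↑hfin.toFinset := by simpa using hf.isCycleOn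
  ext x
  by_cases hx : f x = x
  · exact pow_apply_eq_self_of_apply_eq_self hx _
  · rw [Set.ncard_eq_toFinset_card _ hfin, hon.pow_card_apply (by simpa using hx), one_apply]

variable [DecidableEq α]

theorem setOf_swap_mul_apply_ne {f : Perm α} {x : α} (hffx : f (f x) ≠ x) :
    {y | (swap x (f x) * f) y ≠ y} = {y | f y ≠ y} \ {x} := by
  ext y
  simp only [Set.mem_ofPred_eq, Set.mem_sdiff, Set.mem_singleton_iff, mul_apply]
  by_cases hyx : y = x
  · subst hyx; simp
  by_cases hfy : f y = x
  · rw [hfy, swap_apply_left]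
    exact iff_of_true (fun h => hffx (by rw [h, hfy])) ⟨fun h => hyx h.symm, hyx⟩
  · rw [swap_apply_of_ne_of_ne hfy (f.injective.ne hyx)]
    exact ⟨fun h => ⟨h, hyx⟩, And.left⟩

theorem setOf_mul_swap_apply_ne {p : Perm α} {a e : α} (ha : p a ≠ a) (he : p e = e) :
    {x | (p * swap a e) x ≠ x} = insert e {x | p x ≠ x} := by
  have hae : a ≠ e := fun h => ha (h ▸ he)
  ext x
  simp only [Set.mem_ofPred_eq, Set.mem_insert_iff, mul_apply]
  by_cases hxa : x = a
  · subst hxa; simp [he, hae.symm, ha]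
  by_cases hxe : x = e
  · subst hxe
    simpa using fun h : p a = x => hae (p.injective (h.trans he.symm))
  · simp [swap_apply_of_ne_of_ne hxa hxe, hxe]

theorem IsCycle.mul_swap_of_apply_eq_self {p : Perm α} (hp : p.IsCycle) {a e : α}
    (ha : p a ≠ a) (he : p e = e) : (p * swap a e).IsCycle := by
  set f := p * swap a e
  have hfa : f a = e := by simp [f, he]
  have hfe : f e = p a := by simp [f]
  have hstep (x : α) : f.SameCycle x (p x) := by
    by_cases hxa : x = a
    · exact ⟨2, by rw [hxa, zpow_two, mul_apply, hfa, hfe]⟩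
    by_cases hxe : x = e
    · rw [hxe, he]
    · exact ⟨1, by simp [f, swap_apply_of_ne_of_ne hxa hxe]⟩
  refine ⟨a, by rw [hfa]; exact fun h => ha (h ▸ he), fun y hy => ?_⟩
  have hy' : y ∈ insert e {x | p x ≠ x} := setOf_mul_swap_apply_ne ha he ▸ hy
  rcases hy' with rfl | hy'
  · exact ⟨1, by simp [hfa]⟩
  · exact (hp.sameCycle ha hy').of_forall_sameCycle_apply hstep

theorem exists_isCycle_mul_eq_of_apply_eq_self {p q : Perm α} (hp : p.IsCycle) (hq : q.IsCycle)
    (hpq : {x | p x ≠ x} = {x | q x ≠ x}) (E : Finset α)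
    (hE : ∀ e ∈ E, p e = e) :
    ∃ p' q' : Perm α, p'.IsCycle ∧ q'.IsCycle ∧ {x | p' x ≠ x} = {x | p x ≠ x} ∪ E ∧
      {x | q' x ≠ x} = {x | p x ≠ x} ∪ E ∧ p' * q' = p * q := by
  induction E using Finset.induction_on with
  | empty => exact ⟨p, q, hp, hq, by simp, by simp [hpq], rfl⟩
  | insert e E heE ih =>
    obtain ⟨p', q', hp', hq', hp's, hq's, hpq'⟩ := ih fun x hx => hE x (mem_insert_of_mem hx)
    have he : e ∉ {x | p x ≠ x} ∪ E := fun h => h.elim (· (hE e (mem_insert_self e E))) heE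
    have hp'e : p' e = e := by_contra fun h => he (hp's ▸ h)
    have hq'e : q'⁻¹ e = e := by_contra fun h => he (hq's ▸ (setOf_inv_apply_ne q') ▸ h)
    obtain ⟨a, hp'a, -⟩ := id hp'
    have hq'a : q'⁻¹ a ≠ a := by
      change a ∈ {x | q'⁻¹ x ≠ x}
      rw [setOf_inv_apply_ne, hq's, ← hp's]
      exact hp'a
    refine ⟨p' * swap a e, swap a e * q', hp'.mul_swap_of_apply_eq_self hp'a hp'e, ?_, ?_, ?_, ?_⟩
    · simpa [mul_inv_rev] using (hq'.inv.mul_swap_of_apply_eq_self hq'a hq'e).inv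
    · rw [setOf_mul_swap_apply_ne hp'a hp'e, hp's, coe_insert, Set.union_insert]
    · rw [← setOf_inv_apply_ne, mul_inv_rev, swap_inv, setOf_mul_swap_apply_ne hq'a hq'e,
        setOf_inv_apply_ne, hq's, coe_insert, Set.union_insert]
    · rw [mul_assoc, ← mul_assoc (swap a e), swap_mul_self, one_mul, hpq']

theorem IsCycle.exists_ofSubtype_eq {f : Perm α} (hf : f.IsCycle) {s : Finset α}
    (hs : ∀ x, f x ≠ x → x ∈ s) :
    ∃ g : Perm s, g.IsCycle ∧ #g.support = {x | f x ≠ x}.ncard ∧ ofSubtype g = f := by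
  have hmem (x : α) : f x ∈ s ↔ x ∈ s := by
    by_cases hx : f x = x
    · rw [hx]
    · exact iff_of_true (hs _ fun h => hx (f.injective h)) (hs x hx)
  refine ⟨f.subtypePerm hmem, ?_, ?_, ofSubtype_subtypePerm hmem hs⟩
  · obtain ⟨a, ha, hcyc⟩ := hf
    exact ⟨⟨a, hs a ha⟩, fun h => ha (congrArg Subtype.val h),
      fun y hy => sameCycle_subtypePerm.mpr (hcyc fun h => hy (Subtype.ext h))⟩
  · have himage : Subtype.val '' {x : s | f x ≠ x} = {x | f x ≠ x} := by
      ext x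
      exact ⟨by rintro ⟨y, hy, rfl⟩; exact hy, fun hx => ⟨⟨x, hs x hx⟩, hx, rfl⟩⟩
    rw [support_subtypePerm, ← himage, Set.ncard_image_of_injective _ Subtype.val_injective,
      Set.ncard_eq_toFinset_card', Set.toFinset_ofPred]

theorem isConj_of_isCycle_of_ncard_eq {σ τ : Perm α} (hσ : σ.IsCycle) (hτ : τ.IsCycle)
    (hσfin : {x | σ x ≠ x}.Finite) (hτfin : {x | τ x ≠ x}.Finite)
    (h : {x | σ x ≠ x}.ncard = {x | τ x ≠ x}.ncard) : IsConj σ τ := by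
  let s := hσfin.toFinset ∪ hτfin.toFinset
  obtain ⟨g, hg, hgcard, hgσ⟩ := hσ.exists_ofSubtype_eq (s := s) fun x hx => by simp [s, hx]
  obtain ⟨g', hg', hg'card, hg'τ⟩ := hτ.exists_ofSubtype_eq (s := s) fun x hx => by simp [s, hx]
  rw [← hgσ, ← hg'τ]
  exact ofSubtype.map_isConj (hg.isConj hg' (hgcard.trans (h.trans hg'card.symm)))

end Equiv.Perm

open Equiv.Perm

theorem iotaNat_succ (k : ℕ) : iotaNat (k + 1) = iotaNat k * swap (2 * k) (2 * k + 1) := by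
  simp [iotaNat, List.range_succ]

theorem isCycle_iotaNat_mul {f : Perm ℕ} (hf : f.IsCycle) {k : ℕ}
    (hpair : ∀ i < k, f (2 * i) = 2 * i + 1) (hback : ∀ i < k, f (2 * i + 1) ≠ 2 * i) :
    (iotaNat k * f).IsCycle ∧
      {x | (iotaNat k * f) x ≠ x} = {x | f x ≠ x} \ ↑((range k).image (2 * ·)) := by
  induction k generalizing f with
  | zero => simpa [iotaNat] using hf
  | succ k ih =>
    have hfk := hpair k k.lt_succ_self
    have hg : (swap (2 * k) (f (2 * k)) * f).IsCycle :=
      hf.swap_mul (by omega) (by rw [hfk]; exact hback k k.lt_succ_self)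
    have hgs := setOf_swap_mul_apply_ne (f := f) (x := 2 * k)
      (by rw [hfk]; exact hback k k.lt_succ_self)
    rw [hfk] at hg hgs
    obtain ⟨hcyc, hsupp⟩ := ih hg
      (fun i hi => by
        rw [mul_apply, hpair i (by omega), swap_apply_of_ne_of_ne (by omega) (by omega)])
      (fun i hi h => hback i (by omega) (by
        rw [mul_apply, swap_apply_eq_iff, swap_apply_of_ne_of_ne (by omega) (by omega)] at h
        exact h))
    rw [iotaNat_succ, mul_assoc]
    refine ⟨hcyc, hsupp.trans ?_⟩
    rw [hgs, range_add_one, image_insert, coe_insert, Set.sdiff_sdiff, Set.insert_eq]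

theorem formPerm_range_apply {n x : ℕ} (hx : x < n) : (List.range n).formPerm x = (x + 1) % n := by
  have h := List.formPerm_apply_getElem _ List.nodup_range x (by simpa using hx)
  simpa only [List.getElem_range, List.length_range] using h

theorem isCycle_formPerm_range {n : ℕ} (hn : 2 ≤ n) : (List.range n).formPerm.IsCycle :=
  List.isCycle_formPerm List.nodup_range (by rw [List.length_range]; omega)

theorem setOf_formPerm_range_apply_ne {n : ℕ} (hn : 2 ≤ n) :
    {x | (List.range n).formPerm x ≠ x} = ↑(range n) := by
  rw [List.support_formPerm_of_nodup' _ List.nodup_range, List.toFinset_range]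
  intro x h
  have hlen := congrArg List.length h
  simp only [List.length_range, List.length_singleton] at hlen
  omega

theorem isCycle_iotaNat_mul_formPerm_range {n k : ℕ} (hn : 3 ≤ n) (hk : 2 * k ≤ n) :
    (iotaNat k * (List.range n).formPerm).IsCycle ∧
      {x | (iotaNat k * (List.range n).formPerm) x ≠ x} =
        ↑(range n \ (range k).image (2 * ·)) := by
  obtain ⟨hf, hfs⟩ := isCycle_iotaNat_mul (isCycle_formPerm_range (n := n) (by omega)) (k := k)
    (fun i hi => by rw [formPerm_range_apply (by omega), Nat.mod_eq_of_lt (by omega)])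
    (fun i hi => by
      rw [formPerm_range_apply (by omega)]
      rcases (by omega : 2 * i + 2 < n ∨ 2 * i + 2 = n) with h | h
      · rw [Nat.mod_eq_of_lt h]; omega
      · rw [h, Nat.mod_self]; omega)
  rw [setOf_formPerm_range_apply_ne (by omega), ← coe_sdiff] at hfs
  exact ⟨hf, hfs⟩

theorem exists_isCycle_mul_mul_eq_iotaNat {n k : ℕ} (hn : 3 ≤ n) (hk : 2 * k ≤ n)
    (hodd : Odd (n - k)) :
    ∃ P Q R : Perm ℕ, P.IsCycle ∧ Q.IsCycle ∧ R.IsCycle ∧ {x | P x ≠ x} = ↑(range n) ∧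
      {x | Q x ≠ x} = ↑(range n) ∧ {x | R x ≠ x} = ↑(range n) ∧ iotaNat k = P * Q * R := by
  set A := (List.range n).formPerm
  set E := (range k).image (2 * ·)
  have hE : E ⊆ range n := by
    intro x
    simp only [E, mem_image, mem_range]
    omega
  obtain ⟨hf, hfs⟩ := isCycle_iotaNat_mul_formPerm_range hn hk
  have hcard : {x | (iotaNat k * A) x ≠ x}.ncard = n - k := by
    rw [hfs, Set.ncard_coe_finset, card_sdiff_of_subset hE, card_range,
      card_image_of_injective _ (mul_right_injective₀ two_ne_zero), card_range]
  have hord : Odd (orderOf (iotaNat k * A)) :=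
    hodd.of_dvd_nat (hcard ▸ orderOf_dvd_of_pow_eq_one (hf.pow_ncard_eq_one (hfs ▸ finite_toSet _)))
  obtain ⟨g, hg, hgs, hgg⟩ := hf.exists_isCycle_mul_self_eq hord
  have hgE : ∀ e ∈ E, g e = e := fun e he => by
    by_contra h
    have : e ∈ ({x | g x ≠ x} : Set ℕ) := h
    rw [hgs, hfs, coe_sdiff] at this
    exact this.2 he
  obtain ⟨P, Q, hP, hQ, hPs, hQs, hPQ⟩ := exists_isCycle_mul_eq_of_apply_eq_self hg hg rfl E hgE
  have hsupp : {x | g x ≠ x} ∪ ↑E = ↑(range n) := by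
    rw [hgs, hfs, coe_sdiff, Set.sdiff_union_of_subset (coe_subset.2 hE)]
  refine ⟨P, Q, A⁻¹, hP, hQ, (isCycle_formPerm_range (by omega)).inv, hPs.trans hsupp,
    hQs.trans hsupp,
    (setOf_inv_apply_ne A).trans (setOf_formPerm_range_apply_ne (by omega)), ?_⟩
  rw [hPQ, hgg, mul_inv_cancel_right]

theorem iotaNat_one_eq : iotaNat 1 =
    (List.range 2).formPerm * (List.range 2).formPerm * (List.range 2).formPerm := by
  rw [show List.range 2 = [0, 1] from rfl, List.formPerm_pair, swap_mul_self, one_mul]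
  simp [iotaNat]

theorem iotaNat_two_eq :
    iotaNat 2 = [0, 2, 3].formPerm * [0, 2, 3].formPerm * (List.range 3).formPerm := by
  ext x
  by_cases hx : x < 4
  · interval_cases x <;> decide
  · simp [iotaNat, List.formPerm_cons_cons, show List.range 2 = [0, 1] from rfl,
      show List.range 3 = [0, 1, 2] from rfl,
      swap_apply_of_ne_of_ne, show x ≠ 0 by omega, show x ≠ 1 by omega, show x ≠ 2 by omega,
      show x ≠ 3 by omega]

/-- Lemma 8.8: if `σ` is a finitely supported cycle of `ℕ` with support of size `n ≥ 2`,
then there is `k ≥ ⌈n/6⌉` such that `ι_k` is a product of three conjugates of `σ`. -/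
theorem iota_eq_prod_three_conjugates_of_cycle (σ : Equiv.Perm ℕ) (hc : σ.IsCycle)
    (n : ℕ) (hfin : {x : ℕ | σ x ≠ x}.Finite) (hcard : {x : ℕ | σ x ≠ x}.ncard = n)
    (hn : 2 ≤ n) :
    ∃ k : ℕ, (n + 5) / 6 ≤ k ∧
      ∃ σ₁ σ₂ σ₃ : Equiv.Perm ℕ,
        IsConj σ σ₁ ∧ IsConj σ σ₂ ∧ IsConj σ σ₃ ∧ iotaNat k = σ₁ * σ₂ * σ₃ := by
  have hconj (τ : Perm ℕ) (s : Finset ℕ) (hτ : τ.IsCycle) (hτs : {x | τ x ≠ x} = ↑s)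
      (hs : #s = n) : IsConj σ τ :=
    isConj_of_isCycle_of_ncard_eq hc hτ hfin (hτs ▸ s.finite_toSet)
      (by rw [hcard, hτs, Set.ncard_coe_finset, hs])
  have hrange : IsConj σ (List.range n).formPerm :=
    hconj _ _ (isCycle_formPerm_range hn) (setOf_formPerm_range_apply_ne hn) (card_range n)
  obtain rfl | rfl | hn4 : n = 2 ∨ n = 3 ∨ 4 ≤ n := by omega
  · exact ⟨1, le_rfl, _, _, _, hrange, hrange, hrange, iotaNat_one_eq⟩
  · have h := hconj [0, 2, 3].formPerm [0, 2, 3].toFinset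
      (List.isCycle_formPerm (by decide) (by decide))
      (List.support_formPerm_of_nodup' _ (by decide) (by simp)) rfl
    exact ⟨2, by norm_num, _, _, _, h, h, hrange, iotaNat_two_eq⟩
  · -- `k` is `n / 2` or `n / 2 - 1`, whichever makes `n - k` odd.
    obtain ⟨k, hk6, hk, hodd⟩ : ∃ k, (n + 5) / 6 ≤ k ∧ 2 * k ≤ n ∧ Odd (n - k) :=
      ⟨n / 2 - (n - n / 2 + 1) % 2, by omega, by omega, Nat.odd_iff.2 (by omega)⟩
    obtain ⟨P, Q, R, hP, hQ, hR, hPs, hQs, hRs, h⟩ :=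
      exists_isCycle_mul_mul_eq_iotaNat (by omega) hk hodd
    exact ⟨k, hk6, P, Q, R, hconj P _ hP hPs (card_range n), hconj Q _ hQ hQs (card_range n),
      hconj R _ hR hRs (card_range n), h⟩
end

section
/- Let σ be a finitely supported permutation of ℕ with σ ≠ 1, and let ν(σ) denote the cardinality of its support. Then there exists a positive integer k with k ≤ ν(σ) such that σ is a product of three permutations of ℕ, each conjugate to ι_k. -/
open Equiv Equiv.Perm Finset

theorem exists_sq_eq_one_mul_eq_finRotate (n : ℕ) :
    ∃ a b : Perm (Fin n), a ^ 2 = 1 ∧ b ^ 2 = 1 ∧ finRotate n = a * b := by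
  rcases n with _ | m
  · exact ⟨1, 1, one_pow 2, one_pow 2, Subsingleton.elim _ _⟩
  refine ⟨Equiv.subLeft 1, Equiv.neg _, ?_, ?_, ?_⟩ <;> ext i : 1
  · simp [sq]
  · simp [sq]
  · simp [finRotate_apply, sub_neg_eq_add, add_comm]

theorem List.Nodup.formPerm_eq_extendDomain {α : Type*} [DecidableEq α] {l : List α}
    (hl : l.Nodup) : l.formPerm = (finRotate l.length).extendDomain hl.getEquiv := by
  ext y
  by_cases hy : y ∈ l
  · obtain ⟨i, hi, rfl⟩ := List.getElem_of_mem hy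
    have := (finRotate l.length).extendDomain_apply_image hl.getEquiv ⟨i, hi⟩
    simp only [List.Nodup.getEquiv_apply_coe, List.get_eq_getElem, finRotate_apply] at this
    rw [this, List.formPerm_apply_getElem _ hl]
    simp [Fin.val_add]
  · rw [List.formPerm_apply_of_notMem hy, extendDomain_apply_not_subtype _ _ hy]

namespace Equiv.Perm

section Finite

variable {α : Type*} [DecidableEq α] [Fintype α]

theorem IsCycle.exists_sq_eq_one_mul_eq {c : Perm α} (hc : c.IsCycle) :
    ∃ a b : Perm α, a ^ 2 = 1 ∧ b ^ 2 = 1 ∧ a.support ⊆ c.support ∧ b.support ⊆ c.support ∧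
      c = a * b := by
  obtain ⟨x, hx⟩ := hc.nonempty_support
  have hl := nodup_toList c x
  obtain ⟨a, b, ha, hb, hab⟩ := exists_sq_eq_one_mul_eq_finRotate (c.toList x).length
  let φ := extendDomainHom hl.getEquiv
  have hφ : ∀ e, (φ e).support ⊆ c.support := fun e y hy => by
    by_contra hyc
    refine mem_support.mp hy (extendDomain_apply_not_subtype _ _ fun hyl => hyc ?_)
    exact ((mem_toList_iff.mp hyl).1.mem_support_iff).mp hx
  refine ⟨φ a, φ b, by rw [← map_pow, ha, map_one], by rw [← map_pow, hb, map_one],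
    hφ a, hφ b, ?_⟩
  rw [← map_mul, ← hab, extendDomainHom_apply, ← hl.formPerm_eq_extendDomain, formPerm_toList,
    hc.cycleOf_eq (mem_support.mp hx)]

theorem exists_sq_eq_one_mul_eq (σ : Perm α) :
    ∃ a b : Perm α, a ^ 2 = 1 ∧ b ^ 2 = 1 ∧ a.support ⊆ σ.support ∧ b.support ⊆ σ.support ∧
      σ = a * b := by
  induction σ using cycle_induction_on with
  | base_one => exact ⟨1, 1, one_pow 2, one_pow 2, by simp, by simp, (one_mul 1).symm⟩
  | base_cycles c hc => exact hc.exists_sq_eq_one_mul_eq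
  | induction_disjoint σ τ hστ _ hσ hτ =>
    obtain ⟨a₁, b₁, ha₁, hb₁, sa₁, sb₁, rfl⟩ := hσ
    obtain ⟨a₂, b₂, ha₂, hb₂, sa₂, sb₂, rfl⟩ := hτ
    have hsupp : ∀ {f g : Perm α}, f.support ⊆ (a₁ * b₁).support →
        g.support ⊆ (a₂ * b₂).support → (f * g).support ⊆ (a₁ * b₁ * (a₂ * b₂)).support :=
      fun hf hg => hστ.support_mul ▸ (support_mul_le _ _).trans (union_subset_union hf hg)
    refine ⟨a₁ * a₂, b₁ * b₂, ?_, ?_, hsupp sa₁ sa₂, hsupp sb₁ sb₂, ?_⟩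
    · rw [(hστ.mono sa₁ sa₂).commute.mul_pow, ha₁, ha₂, one_mul]
    · rw [(hστ.mono sb₁ sb₂).commute.mul_pow, hb₁, hb₂, one_mul]
    · rw [mul_assoc, ← mul_assoc b₁, (hστ.mono sb₁ sa₂).commute.eq, mul_assoc, mul_assoc]

theorem cycleType_eq_replicate_two_iff {σ : Perm α} {k : ℕ} :
    σ.cycleType = Multiset.replicate k 2 ↔ σ ^ 2 = 1 ∧ #σ.support = 2 * k := by
  constructor
  · intro h
    refine ⟨pow_prime_eq_one_iff.mpr fun n hn => Multiset.eq_of_mem_replicate (h ▸ hn), ?_⟩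
    rw [← sum_cycleType, h, Multiset.sum_replicate, smul_eq_mul, mul_comm]
  · rintro ⟨h2, hk⟩
    have hsum := sum_cycleType σ
    rw [cycleType_of_pow_prime_eq_one h2, Multiset.sum_replicate, smul_eq_mul] at hsum
    rw [cycleType_of_pow_prime_eq_one h2, show σ.cycleType.card = k by omega]

theorem exists_cycleType_eq_replicate_two_disjoint (s : Finset α) (m : ℕ)
    (h : #s + 2 * m ≤ Fintype.card α) :
    ∃ u : Perm α, u.cycleType = Multiset.replicate m 2 ∧ _root_.Disjoint u.support s := by
  induction m with
  | zero => exact ⟨1, by simp, by simp⟩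
  | succ m ih =>
    obtain ⟨u, hu, hus⟩ := ih (by omega)
    have hcard : #(s ∪ u.support) + 2 ≤ Fintype.card α := by
      have := card_union_le s u.support
      have := (cycleType_eq_replicate_two_iff.mp hu).2
      omega
    obtain ⟨x, hx, y, hy, hxy⟩ :=
      one_lt_card.mp (show 1 < #(s ∪ u.support)ᶜ by rw [card_compl]; omega)
    simp only [mem_compl, mem_union, not_or] at hx hy
    have hswap : (swap x y).cycleType = Multiset.replicate 1 2 :=
      cycleType_eq_replicate_two_iff.mpr ⟨by rw [sq, swap_mul_self], card_support_swap hxy⟩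
    have hdisj : Disjoint (swap x y) u := by
      rw [disjoint_iff_disjoint_support, support_swap hxy]
      simp [hx.2, hy.2]
    refine ⟨swap x y * u, ?_, ?_⟩
    · rw [hdisj.cycleType_mul, hswap, hu, ← Multiset.replicate_add, add_comm]
    · rw [hdisj.support_mul, support_swap hxy, disjoint_union_left]
      simp [hx.1, hy.1, hus]

theorem exists_eq_mul_mul_cycleType_eq_replicate_two (σ : Perm α)
    (h : 3 * #σ.support ≤ Fintype.card α) :
    ∃ k ≤ #σ.support, ∃ σ₁ σ₂ σ₃ : Perm α, σ₁.cycleType = Multiset.replicate k 2 ∧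
      σ₂.cycleType = Multiset.replicate k 2 ∧ σ₃.cycleType = Multiset.replicate k 2 ∧
      σ = σ₁ * σ₂ * σ₃ := by
  obtain ⟨a, b, ha, hb, sa, sb, rfl⟩ := exists_sq_eq_one_mul_eq σ
  obtain ⟨p, hp⟩ : ∃ p, a.cycleType = Multiset.replicate p 2 :=
    ⟨_, cycleType_of_pow_prime_eq_one ha⟩
  obtain ⟨q, hq⟩ : ∃ q, b.cycleType = Multiset.replicate q 2 :=
    ⟨_, cycleType_of_pow_prime_eq_one hb⟩
  have hpν := (cycleType_eq_replicate_two_iff.mp hp).2 ▸ card_le_card sa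
  have hqν := (cycleType_eq_replicate_two_iff.mp hq).2 ▸ card_le_card sb
  obtain ⟨u, hu, hus⟩ := exists_cycleType_eq_replicate_two_disjoint (a * b).support q (by omega)
  obtain ⟨w, hw, hws⟩ :=
    exists_cycleType_eq_replicate_two_disjoint ((a * b).support ∪ u.support) p <| by
      have := card_union_le (a * b).support u.support
      have := (cycleType_eq_replicate_two_iff.mp hu).2
      omega
  rw [disjoint_union_right] at hws
  have hau : Disjoint a u := disjoint_iff_disjoint_support.mpr (hus.symm.mono_left sa)
  have hbu : Disjoint b u := disjoint_iff_disjoint_support.mpr (hus.symm.mono_left sb)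
  have hbw : Disjoint b w := disjoint_iff_disjoint_support.mpr (hws.1.symm.mono_left sb)
  have hwu : Disjoint w u := disjoint_iff_disjoint_support.mpr hws.2
  refine ⟨p + q, by omega, a * u, b * w, w * u, ?_, ?_, ?_, ?_⟩
  · rw [hau.cycleType_mul, hp, hu, Multiset.replicate_add]
  · rw [hbw.cycleType_mul, hq, hw, add_comm p, Multiset.replicate_add]
  · rw [hwu.cycleType_mul, hw, hu, Multiset.replicate_add]
  · have hu2 := (cycleType_eq_replicate_two_iff.mp hu).1
    have hw2 := (cycleType_eq_replicate_two_iff.mp hw).1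
    rw [sq] at hu2 hw2
    calc a * b = a * b * (u * u) := by rw [hu2, mul_one]
      _ = a * u * (b * (w * w)) * u := by
        rw [hw2, mul_one, mul_assoc a u b, ← hbu.commute.eq]; group
      _ = a * u * (b * w) * (w * u) := by group

end Finite

section Subtype

variable {α : Type*} {p : α → Prop} [DecidablePred p]

theorem exists_ofSubtype_eq {σ : Perm α} (h : ∀ x, σ x ≠ x → p x) :
    ∃ u : Perm (Subtype p), ofSubtype u = σ := by
  refine ⟨σ.subtypePerm fun x => ?_, ofSubtype_subtypePerm _ h⟩
  by_cases hx : σ x = x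
  · rw [hx]
  · exact iff_of_true (h _ fun h' => hx (σ.injective h')) (h x hx)

theorem ncard_setOf_ofSubtype_apply_ne [DecidableEq α] [Fintype (Subtype p)]
    (u : Perm (Subtype p)) : {x | ofSubtype u x ≠ x}.ncard = #u.support := by
  have : {x | ofSubtype u x ≠ x} = Subtype.val '' (u.support : Set (Subtype p)) := by
    ext x
    by_cases hx : p x
    · simp [ofSubtype_apply_of_mem u hx, hx, Subtype.ext_iff]
    · simp [ofSubtype_apply_of_not_mem u hx, hx]
  rw [this, Set.ncard_image_of_injective _ Subtype.val_injective, Set.ncard_coe_finset]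

end Subtype

end Equiv.Perm

theorem iotaNat_apply (k x : ℕ) :
    iotaNat k x = if x < 2 * k then (if x % 2 = 0 then x + 1 else x - 1) else x := by
  induction k generalizing x with
  | zero => simp [iotaNat]
  | succ k ih =>
    have : iotaNat (k + 1) = iotaNat k * swap (2 * k) (2 * k + 1) := by
      simp [iotaNat, List.range_succ]
    rw [this, Perm.mul_apply, ih, swap_apply_def]
    split_ifs <;> omega

theorem iotaNat_sq (k : ℕ) : iotaNat k ^ 2 = 1 := by
  ext x
  simp only [sq, Perm.mul_apply, iotaNat_apply, Perm.one_apply]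
  split_ifs <;> omega

theorem setOf_iotaNat_apply_ne (k : ℕ) : {x | iotaNat k x ≠ x} = Set.Iio (2 * k) := by
  ext x
  simp only [Set.mem_ofPred_eq, Set.mem_Iio, iotaNat_apply]
  split_ifs <;> omega

theorem exists_ofSubtype_eq_iotaNat {k M : ℕ} (h : 2 * k ≤ M) :
    ∃ ι : Perm (range M), ofSubtype ι = iotaNat k ∧ ι.cycleType = Multiset.replicate k 2 := by
  obtain ⟨ι, hι⟩ := exists_ofSubtype_eq (p := (· ∈ range M)) (σ := iotaNat k) fun x hx => by
    have : x < 2 * k := by rw [← Set.mem_Iio, ← setOf_iotaNat_apply_ne]; exact hx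
    rw [mem_range]; omega
  refine ⟨ι, hι, cycleType_eq_replicate_two_iff.mpr ⟨?_, ?_⟩⟩
  · exact ofSubtype_injective (by rw [map_pow, hι, iotaNat_sq, map_one])
  · rw [← ncard_setOf_ofSubtype_apply_ne, hι, setOf_iotaNat_apply_ne, Set.ncard_Iio_nat]

/-- Lemma 8.13: if `σ ≠ 1` is a finitely supported permutation of `ℕ`, then there is a
positive `k ≤ ν(σ)` such that `σ` is a product of three conjugates of `ι_k`. -/
theorem perm_eq_prod_three_conjugates_of_iota (σ : Equiv.Perm ℕ) (hσ : σ ≠ 1)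
    (hfin : {x : ℕ | σ x ≠ x}.Finite) :
    ∃ k : ℕ, 0 < k ∧ k ≤ {x : ℕ | σ x ≠ x}.ncard ∧
      ∃ σ₁ σ₂ σ₃ : Equiv.Perm ℕ,
        IsConj (iotaNat k) σ₁ ∧ IsConj (iotaNat k) σ₂ ∧ IsConj (iotaNat k) σ₃ ∧
        σ = σ₁ * σ₂ * σ₃ := by
  obtain ⟨N, hN⟩ := hfin.bddAbove
  let M := N + 1 + 3 * {x : ℕ | σ x ≠ x}.ncard
  obtain ⟨u, hu⟩ := exists_ofSubtype_eq (p := (· ∈ range M)) fun x hx => by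
    have : x ≤ N := hN hx
    rw [mem_range]; omega
  have hν : {x : ℕ | σ x ≠ x}.ncard = #u.support := by
    rw [← hu, ncard_setOf_ofSubtype_apply_ne]
  obtain ⟨k, hk, σ₁, σ₂, σ₃, h₁, h₂, h₃, hprod⟩ :=
    exists_eq_mul_mul_cycleType_eq_replicate_two u (by rw [Fintype.card_coe, card_range]; omega)
  obtain ⟨ι, hι, hιk⟩ := exists_ofSubtype_eq_iotaNat (k := k) (M := M) (by omega)
  have hconj : ∀ τ : Perm (range M), τ.cycleType = Multiset.replicate k 2 →
      IsConj (iotaNat k) (ofSubtype τ) := fun τ hτ =>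
    hι ▸ ofSubtype.map_isConj (isConj_iff_cycleType_eq.mpr (hιk.trans hτ.symm))
  refine ⟨k, Nat.pos_of_ne_zero ?_, hν ▸ hk, _, _, _, hconj _ h₁, hconj _ h₂, hconj _ h₃,
    by rw [← hu, hprod, map_mul, map_mul]⟩
  rintro rfl
  simp only [Multiset.replicate_zero, cycleType_eq_zero] at h₁ h₂ h₃
  subst h₁ h₂ h₃
  exact hσ (by rw [← hu, hprod, mul_one, mul_one, map_one])
end
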